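/- arXiv:2107.11893 — 3 statements merged into one kernel-verified Lean document; each statement's English description precedes it below -/
import Mathlib

section
/- Let φ be a non-negative function with φ ∈ L^1(0,∞). Then the Hausdorff operator H_{α,β,φ} is bounded from L^1(ℝ, A_{α,β}) to L^1(ℝ, A_{α,β}), and for every f ∈ L^1(ℝ, A_{α,β}) one has ∫_ℝ |H_{α,β,φ} f(x)| A_{α,β}(x) dx ≤ (∫_0^∞ φ(t) dt) · ∫_ℝ |f(x)| A_{α,β}(x) dx. -/
open MeasureTheory Set ENNReal

/-- The weight `A_{α,β}(x) = (sinh|x|)^{2α+1} (cosh|x|)^{2β+1}`. -/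
noncomputable def Aw (α β : ℝ) (x : ℝ) : ℝ :=
  Real.sinh |x| ^ (2 * α + 1) * Real.cosh |x| ^ (2 * β + 1)

/-- The Hausdorff operator associated with the Opdam–Cherednik transform. -/
noncomputable def Hop (α β : ℝ) (φ f : ℝ → ℝ) (x : ℝ) : ℝ :=
  ∫ t in Set.Ioi (0 : ℝ), (φ t / t) * f (x / t) * (Aw α β (x / t) / Aw α β x)

/-- The `L^p(I, A_{α,β})` norm, as an extended nonnegative real. -/
noncomputable def lpN (α β p : ℝ) (I : Set ℝ) (f : ℝ → ℝ) : ℝ≥0∞ :=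
  (∫⁻ x in I, ENNReal.ofReal (|f x| ^ p * Aw α β x)) ^ (1 / p)

/-!
Multiplying by the weight conjugates `H_{α,β,φ}` to the classical Hausdorff operator
`g ↦ ∫₀^∞ φ(t)/t · g(x/t) dt` applied to `g = f A_{α,β}`, wherever `A_{α,β}(x) ≠ 0`.
The classical operator has norm at most `‖φ‖₁` on `L¹(ℝ)`: by Tonelli the `x`-integral can be
taken first, and the dilation `x ↦ x/t` multiplies it by `t`, which cancels the factor `1/t`.
-/

theorem lintegral_comp_div_of_pos (G : ℝ → ℝ≥0∞) {t : ℝ} (ht : 0 < t) :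
    ∫⁻ x, G (x / t) = ENNReal.ofReal t * ∫⁻ x, G x := by
  simp_rw [div_eq_inv_mul]
  rw [← (measurableEmbedding_mulLeft₀ (inv_ne_zero ht.ne')).lintegral_map,
    Real.map_volume_mul_left (inv_ne_zero ht.ne'), lintegral_smul_measure, inv_inv,
    abs_of_pos ht, smul_eq_mul]

theorem lintegral_lintegral_div_mul_comp_div {Φ G : ℝ → ℝ≥0∞}
    (hΦ : AEMeasurable Φ (volume.restrict (Ioi 0))) (hG : Measurable G) :
    ∫⁻ x, ∫⁻ t in Ioi 0, Φ t / ENNReal.ofReal t * G (x / t) =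
      (∫⁻ t in Ioi 0, Φ t) * ∫⁻ x, G x := by
  have hmeas : AEMeasurable (Function.uncurry fun x t => Φ t / ENNReal.ofReal t * G (x / t))
      (volume.prod (volume.restrict (Ioi 0))) :=
    (hΦ.comp_snd.div measurable_snd.ennreal_ofReal.aemeasurable).mul
      (hG.comp (measurable_fst.div measurable_snd)).aemeasurable
  rw [lintegral_lintegral_swap hmeas, ← lintegral_mul_const'' _ hΦ]
  refine setLIntegral_congr_fun measurableSet_Ioi fun t ht => ?_
  rw [lintegral_const_mul (f := fun x => G (x / t)) _ (hG.comp (measurable_div_const t)),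
    lintegral_comp_div_of_pos G ht, ← mul_assoc,
    ENNReal.div_mul_cancel (ENNReal.ofReal_pos.2 ht).ne' ENNReal.ofReal_ne_top]

theorem lintegral_enorm_hausdorff_le {φ g : ℝ → ℝ} (hφ_nonneg : ∀ t > 0, 0 ≤ φ t)
    (hφ : AEMeasurable φ (volume.restrict (Ioi 0))) (hg : Measurable g) :
    ∫⁻ x, ‖∫ t in Ioi 0, φ t / t * g (x / t)‖ₑ ≤
      (∫⁻ t in Ioi 0, ENNReal.ofReal (φ t)) * ∫⁻ x, ‖g x‖ₑ := calc
  _ ≤ ∫⁻ x, ∫⁻ t in Ioi 0, ENNReal.ofReal (φ t) / ENNReal.ofReal t * ‖g (x / t)‖ₑ := by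
    refine lintegral_mono fun x => (enorm_integral_le_lintegral_enorm _).trans_eq ?_
    refine setLIntegral_congr_fun measurableSet_Ioi fun t (ht : 0 < t) => ?_
    rw [enorm_mul, Real.enorm_eq_ofReal (div_nonneg (hφ_nonneg t ht) ht.le),
      ENNReal.ofReal_div_of_pos ht]
  _ = _ := lintegral_lintegral_div_mul_comp_div hφ.ennreal_ofReal hg.enorm

theorem Aw_nonneg (α β x : ℝ) : 0 ≤ Aw α β x :=
  mul_nonneg (Real.rpow_nonneg (by simp) _) (Real.rpow_nonneg (Real.cosh_pos _).le _)

theorem measurable_Aw (α β : ℝ) : Measurable (Aw α β) :=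
  ((Real.continuous_sinh.comp continuous_abs).measurable.pow_const _).mul
    ((Real.continuous_cosh.comp continuous_abs).measurable.pow_const _)

theorem enorm_mul_Aw (α β : ℝ) (f : ℝ → ℝ) (x : ℝ) :
    ‖f x * Aw α β x‖ₑ = ENNReal.ofReal (|f x| * Aw α β x) := by
  rw [Real.enorm_eq_ofReal_abs, abs_mul, abs_of_nonneg (Aw_nonneg α β x)]

theorem Hop_mul_Aw (α β : ℝ) (φ f : ℝ → ℝ) {x : ℝ} (hx : Aw α β x ≠ 0) :
    Hop α β φ f x * Aw α β x = ∫ t in Ioi 0, φ t / t * (f (x / t) * Aw α β (x / t)) := by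
  rw [Hop, ← integral_mul_const]
  congr 1 with t
  field_simp

theorem ofReal_abs_Hop_mul_Aw_le (α β : ℝ) (φ f : ℝ → ℝ) (x : ℝ) :
    ENNReal.ofReal (|Hop α β φ f x| * Aw α β x) ≤
      ‖∫ t in Ioi 0, φ t / t * (f (x / t) * Aw α β (x / t))‖ₑ := by
  by_cases hx : Aw α β x = 0
  · simp [hx]
  · rw [← Hop_mul_Aw α β φ f hx, Real.enorm_eq_ofReal_abs, abs_mul,
      abs_of_nonneg (Aw_nonneg α β x)]

theorem hausdorff_L1_bounded_general (α β : ℝ)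
    (φ : ℝ → ℝ) (hφpos : ∀ t, 0 ≤ φ t) (hφint : IntegrableOn φ (Set.Ioi 0))
    (f : ℝ → ℝ) (hf : Measurable f) :
    ∫⁻ x, ENNReal.ofReal (|Hop α β φ f x| * Aw α β x) ≤
      (∫⁻ t in Set.Ioi (0 : ℝ), ENNReal.ofReal (φ t)) *
        ∫⁻ x, ENNReal.ofReal (|f x| * Aw α β x) := calc
  _ ≤ ∫⁻ x, ‖∫ t in Ioi 0, φ t / t * (f (x / t) * Aw α β (x / t))‖ₑ :=
    lintegral_mono (ofReal_abs_Hop_mul_Aw_le α β φ f)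
  _ ≤ (∫⁻ t in Ioi 0, ENNReal.ofReal (φ t)) * ∫⁻ x, ‖f x * Aw α β x‖ₑ :=
    lintegral_enorm_hausdorff_le (fun t _ => hφpos t) hφint.aestronglyMeasurable.aemeasurable
      (hf.mul (measurable_Aw α β))
  _ = _ := by simp_rw [enorm_mul_Aw]

/-- Boundedness of the Hausdorff operator on `L^1(ℝ, A_{α,β})`. -/
theorem hausdorff_L1_bounded (α β : ℝ) (hβα : β ≤ α) (hβ : -(1/2 : ℝ) ≤ β)
    (hα : -(1/2 : ℝ) < α)
    (φ : ℝ → ℝ) (hφpos : ∀ t, 0 ≤ φ t) (hφint : IntegrableOn φ (Set.Ioi 0))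
    (f : ℝ → ℝ) (hf : Measurable f)
    (hfL1 : ∫⁻ x, ENNReal.ofReal (|f x| * Aw α β x) < ⊤) :
    ∫⁻ x, ENNReal.ofReal (|Hop α β φ f x| * Aw α β x) ≤
      (∫⁻ t in Set.Ioi (0 : ℝ), ENNReal.ofReal (φ t)) *
        ∫⁻ x, ENNReal.ofReal (|f x| * Aw α β x) :=
  hausdorff_L1_bounded_general α β φ hφpos hφint f hf
end

section
/- Let 1 < q < p < ∞ and let φ be a non-negative function with φ ∈ L^1(0,∞) such that C := ∫_0^∞ (φ(t)/t) · t^{1/q} · ( ∫_ℝ ( A_{α,β}(u)^{q - q/p} / A_{α,β}(tu)^{q-1} )^{p/(p-q)} du )^{(p-q)/(pq)} dt < ∞. Then the Hausdorff operator H_{α,β,φ} is bounded from L^p(ℝ, A_{α,β}) to L^q(ℝ, A_{α,β}), and for every f ∈ L^p(ℝ, A_{α,β}) one has ‖H_{α,β,φ} f‖_{L^q(ℝ,A_{α,β})} ≤ C · ‖f‖_{L^p(ℝ,A_{α,β})}. -/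
/-!
Bound `|H f(x)|` by the Lebesgue integral of the modulus of its integrand and apply Minkowski's
integral inequality in `L^q(A_{α,β} dx)`, which moves the `L^q` norm inside the `t`-integral.
For a fixed dilation `t`, the substitution `x = t u` and Hölder's inequality with exponents
`p/q` and `p/(p-q)` bound the inner norm by `t^{1/q} ‖f‖_p` times the `t`-dependent weight
integral appearing in the constant.
-/

open MeasureTheory Set ENNReal

open Function

namespace ENNReal

theorem rpow_le_of_le_mul_rpow_one_sub {M R : ℝ≥0∞} {r : ℝ} (hr : 0 < r) (hM : M ≠ ⊤)
    (h : M ≤ R * M ^ (1 - r)) : M ^ r ≤ R := by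
  rcases eq_or_ne M 0 with rfl | hM0
  · simp [zero_rpow_of_pos hr]
  have hsplit : M = M ^ r * M ^ (1 - r) := by
    rw [← rpow_add _ _ hM0 hM, add_sub_cancel, rpow_one]
  refine (ENNReal.mul_le_mul_iff_left (c := M ^ (1 - r))
    (rpow_pos (pos_iff_ne_zero.2 hM0) hM).ne'
    (rpow_ne_top_of_nonneg' (pos_iff_ne_zero.2 hM0) hM)).1 ?_
  rwa [← hsplit]

theorem lintegral_mul_rpow_sub_one_le {X : Type*} [MeasurableSpace X] {μ : Measure X}
    {f T : X → ℝ≥0∞} (hf : AEMeasurable f μ) (hT : AEMeasurable T μ) {q : ℝ} (hq : 1 ≤ q) :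
    ∫⁻ x, f x * T x ^ (q - 1) ∂μ ≤
      (∫⁻ x, f x ^ q ∂μ) ^ (1 / q) * (∫⁻ x, T x ^ q ∂μ) ^ (1 - 1 / q) := by
  have hq0 : q ≠ 0 := by positivity
  have hsplit : ∀ x, f x * T x ^ (q - 1) = (f x ^ q) ^ (1 / q) * (T x ^ q) ^ (1 - 1 / q) := by
    intro x
    rw [← rpow_mul, ← rpow_mul, mul_one_div_cancel hq0, rpow_one, mul_one_sub,
      mul_one_div_cancel hq0]
  simp_rw [hsplit]
  exact lintegral_mul_norm_pow_le (hf.pow_const q) (hT.pow_const q) (by positivity)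
    (sub_nonneg.2 (div_le_one_of_le₀ hq (by linarith))) (by ring)

section Minkowski

variable {X Y : Type*} [MeasurableSpace X] [MeasurableSpace Y] {μ : Measure X} {ν : Measure Y}
  {g : X → Y → ℝ≥0∞} {q : ℝ}

theorem lintegral_rpow_le_of_le_lintegral [SFinite μ] [SFinite ν] (hg : Measurable (uncurry g))
    (hq : 1 ≤ q) {T : Y → ℝ≥0∞} (hT : Measurable T) (hTg : ∀ y, T y ≤ ∫⁻ x, g x y ∂μ)
    (hfin : ∫⁻ y, T y ^ q ∂ν ≠ ⊤) :
    (∫⁻ y, T y ^ q ∂ν) ^ (1 / q) ≤ ∫⁻ x, (∫⁻ y, g x y ^ q ∂ν) ^ (1 / q) ∂μ := by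
  have hq0 : 0 < q := by linarith
  refine rpow_le_of_le_mul_rpow_one_sub (one_div_pos.2 hq0) hfin ?_
  have hT_pow : ∀ y, T y ^ q = T y * T y ^ (q - 1) := fun y => by
    simpa using rpow_add_of_nonneg (x := T y) 1 (q - 1) zero_le_one (sub_nonneg.2 hq)
  calc ∫⁻ y, T y ^ q ∂ν
      = ∫⁻ y, T y * T y ^ (q - 1) ∂ν := by simp_rw [hT_pow]
    _ ≤ ∫⁻ y, (∫⁻ x, g x y ∂μ) * T y ^ (q - 1) ∂ν := by gcongr with y; exact hTg y
    _ = ∫⁻ y, ∫⁻ x, g x y * T y ^ (q - 1) ∂μ ∂ν := by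
      congr with y
      exact (lintegral_mul_const _ (hg.comp measurable_prodMk_right)).symm
    _ = ∫⁻ x, ∫⁻ y, g x y * T y ^ (q - 1) ∂ν ∂μ :=
      (lintegral_lintegral_swap (by fun_prop)).symm
    _ ≤ ∫⁻ x, (∫⁻ y, g x y ^ q ∂ν) ^ (1 / q) * (∫⁻ y, T y ^ q ∂ν) ^ (1 - 1 / q) ∂μ :=
      lintegral_mono fun x => lintegral_mul_rpow_sub_one_le
        (hg.comp measurable_prodMk_left).aemeasurable hT.aemeasurable hq
    _ = (∫⁻ x, (∫⁻ y, g x y ^ q ∂ν) ^ (1 / q) ∂μ) * (∫⁻ y, T y ^ q ∂ν) ^ (1 - 1 / q) :=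
      lintegral_mul_const' _ _
        (rpow_ne_top_of_nonneg (sub_nonneg.2 (div_le_one_of_le₀ hq (by linarith))) hfin)

theorem lintegral_le_of_forall_le_of_lintegral_ne_top [SigmaFinite ν] {S : Y → ℝ≥0∞}
    (hS : Measurable S) {R : ℝ≥0∞}
    (h : ∀ T : Y → ℝ≥0∞, Measurable T → T ≤ S → ∫⁻ y, T y ∂ν ≠ ⊤ → ∫⁻ y, T y ∂ν ≤ R) :
    ∫⁻ y, S y ∂ν ≤ R := by
  set T : ℕ → Y → ℝ≥0∞ := fun n => (spanningSets ν n).indicator fun y => min (S y) n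
  have hT_meas : ∀ n, Measurable (T n) := fun n =>
    (hS.min measurable_const).indicator (measurableSet_spanningSets ν n)
  have hT_le : ∀ n, T n ≤ S := fun n y =>
    (indicator_le_self' (fun _ _ => zero_le) y).trans (min_le_left _ _)
  have hT_mono : Monotone T := fun m n hmn y =>
    (indicator_le_indicator_of_subset (monotone_spanningSets ν hmn) (fun _ => zero_le) y).trans
      (indicator_le_indicator (min_le_min_left _ (Nat.cast_le.2 hmn)))
  have hT_sup : ∀ y, ⨆ n, T n y = S y := by
    intro y
    refine le_antisymm (iSup_le fun n => hT_le n y) ?_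
    calc S y = ⨆ n : ℕ, min (S y) n := by rw [← inf_iSup_eq, iSup_natCast, inf_top_eq]
      _ ≤ ⨆ n, T n y := iSup_mono' fun n => ⟨max n (spanningSetsIndex ν y), by
          simp only [T]
          rw [indicator_of_mem (monotone_spanningSets ν (le_max_right _ _)
            (mem_spanningSetsIndex ν y))]
          exact min_le_min_left _ (Nat.cast_le.2 (le_max_left _ _))⟩
  have hT_fin : ∀ n, ∫⁻ y, T n y ∂ν ≠ ⊤ := by
    intro n
    refine ne_top_of_le_ne_top ?_ (lintegral_mono fun y =>
      indicator_le_indicator (g := fun _ => (n : ℝ≥0∞)) (min_le_right (S y) n))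
    rw [lintegral_indicator_const (measurableSet_spanningSets ν n)]
    exact mul_ne_top (natCast_ne_top n) (measure_spanningSets_lt_top ν n).ne
  calc ∫⁻ y, S y ∂ν = ⨆ n, ∫⁻ y, T n y ∂ν := by
        simp_rw [← hT_sup]; exact lintegral_iSup hT_meas hT_mono
    _ ≤ R := iSup_le fun n => h (T n) (hT_meas n) (hT_le n) (hT_fin n)

/-- Minkowski's integral inequality. -/
theorem lintegral_rpow_lintegral_le [SFinite μ] [SigmaFinite ν] (hg : Measurable (uncurry g))
    (hq : 1 ≤ q) :
    (∫⁻ y, (∫⁻ x, g x y ∂μ) ^ q ∂ν) ^ (1 / q) ≤ ∫⁻ x, (∫⁻ y, g x y ^ q ∂ν) ^ (1 / q) ∂μ := by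
  have hq0 : 0 < q := by linarith
  rw [one_div, rpow_inv_le_iff hq0]
  refine lintegral_le_of_forall_le_of_lintegral_ne_top
    (hg.lintegral_prod_left.pow_const q) fun T hT hTS hfin => ?_
  have hT_root : ∀ y, (T y ^ q⁻¹) ^ q = T y := fun y => rpow_inv_rpow hq0.ne' (T y)
  have key := lintegral_rpow_le_of_le_lintegral hg hq (hT.pow_const q⁻¹)
    (fun y => (rpow_inv_le_iff hq0).2 (hTS y)) (by simpa only [hT_root] using hfin)
  simp_rw [hT_root, one_div] at key
  rwa [← rpow_inv_le_iff hq0]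

end Minkowski

end ENNReal

theorem lintegral_eq_ofReal_abs_mul_lintegral_comp_mul_left {t : ℝ} (ht : t ≠ 0)
    (F : ℝ → ℝ≥0∞) : ∫⁻ x, F x = ENNReal.ofReal |t| * ∫⁻ u, F (t * u) := by
  have hmap := (Homeomorph.mulLeft₀ t ht).measurableEmbedding.lintegral_map (μ := volume) F
  simp only [Homeomorph.coe_mulLeft₀, Real.map_volume_mul_left ht, lintegral_smul_measure,
    smul_eq_mul] at hmap
  rw [← hmap, ← mul_assoc, ← ENNReal.ofReal_mul (abs_nonneg t), ← abs_mul, mul_inv_cancel₀ ht,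
    abs_one, ENNReal.ofReal_one, one_mul]

/-- The pointwise factorisation behind Hölder's inequality with exponents `p/q` and `p/(p-q)`. -/
theorem Real.mul_mul_div_mul_rpow_one_div_rpow {p q a b c d : ℝ} (hq : 0 < q) (hqp : q < p)
    (ha : 0 ≤ a) (hb : 0 ≤ b) (hc : 0 < c) (hd : 0 < d) :
    (a * b * (c / d) * d ^ (1 / q)) ^ q =
      a ^ q * ((b ^ p * c) ^ (q / p) *
        ((c ^ (q - q / p) / d ^ (q - 1)) ^ (p / (p - q))) ^ ((p - q) / p)) := by
  have hp : 0 < p := hq.trans hqp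
  have hpq : 0 < p - q := by linarith
  have hb_pow : (b ^ p * c) ^ (q / p) = b ^ q * c ^ (q / p) := by
    rw [Real.mul_rpow (by positivity) hc.le, ← Real.rpow_mul hb, mul_div_cancel₀ _ hp.ne']
  have hroot : ((c ^ (q - q / p) / d ^ (q - 1)) ^ (p / (p - q))) ^ ((p - q) / p) =
      c ^ (q - q / p) / d ^ (q - 1) := by
    rw [← Real.rpow_mul (by positivity), div_mul_div_cancel₀ hpq.ne', div_self hp.ne',
      Real.rpow_one]
  have hc_pow : c ^ q = c ^ (q / p) * c ^ (q - q / p) := by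
    rw [← Real.rpow_add hc, add_sub_cancel]
  have hd_pow : d ^ q = d ^ (q - 1) * d := by
    rw [← Real.rpow_add_one hd.ne', sub_add_cancel]
  rw [hb_pow, hroot, Real.mul_rpow (by positivity) (by positivity),
    Real.mul_rpow (by positivity) (by positivity), Real.mul_rpow ha hb,
    Real.div_rpow hc.le hd.le, ← Real.rpow_mul hd.le, one_div_mul_cancel hq.ne', Real.rpow_one,
    hc_pow, hd_pow]
  field_simp

namespace Aw

variable {α β : ℝ}

@[fun_prop]
theorem measurable : Measurable (Aw α β) := by unfold Aw; fun_prop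

theorem nonneg (x : ℝ) : 0 ≤ Aw α β x := by unfold Aw; positivity

theorem pos {x : ℝ} (hx : x ≠ 0) : 0 < Aw α β x := by
  unfold Aw
  have : 0 < Real.sinh |x| := Real.sinh_pos_iff.2 (abs_pos.2 hx)
  positivity

end Aw

noncomputable def weightQuotientIntegral (α β p q t : ℝ) : ℝ≥0∞ :=
  ∫⁻ u : ℝ, ENNReal.ofReal ((Aw α β u ^ (q - q / p) / Aw α β (t * u) ^ (q - 1)) ^ (p / (p - q)))

section Hausdorff

variable {α β p q : ℝ} {φ f : ℝ → ℝ}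

theorem lpN_univ_rpow (hp : 0 < p) :
    lpN α β p univ f ^ p = ∫⁻ x, ENNReal.ofReal (|f x| ^ p * Aw α β x) := by
  rw [lpN, Measure.restrict_univ, ← rpow_mul, one_div_mul_cancel hp.ne', rpow_one]

theorem enorm_Hop_le (hφ : ∀ t, 0 ≤ φ t) (x : ℝ) :
    ‖Hop α β φ f x‖ₑ ≤
      ∫⁻ t in Ioi 0, ENNReal.ofReal (φ t / t * |f (x / t)| * (Aw α β (x / t) / Aw α β x)) := by
  refine (enorm_integral_le_lintegral_enorm _).trans_eq
    (setLIntegral_congr_fun measurableSet_Ioi fun t ht => ?_)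
  rw [Real.enorm_eq_ofReal_abs, abs_mul, abs_mul, abs_of_nonneg (div_nonneg (hφ t) (le_of_lt ht)),
    abs_of_nonneg (div_nonneg (Aw.nonneg _) (Aw.nonneg _))]

theorem ofReal_rpow_abs_Hop_mul_le (hφ : ∀ t, 0 ≤ φ t) (hq : 0 < q) (x : ℝ) :
    ENNReal.ofReal (|Hop α β φ f x| ^ q * Aw α β x) ≤
      (∫⁻ t in Ioi 0, ENNReal.ofReal
        (φ t / t * |f (x / t)| * (Aw α β (x / t) / Aw α β x) * Aw α β x ^ (1 / q))) ^ q := by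
  have hA : 0 ≤ Aw α β x ^ (1 / q) := Real.rpow_nonneg (Aw.nonneg x) _
  have hsplit : ENNReal.ofReal (|Hop α β φ f x| ^ q * Aw α β x) =
      (‖Hop α β φ f x‖ₑ * ENNReal.ofReal (Aw α β x ^ (1 / q))) ^ q := by
    rw [Real.enorm_eq_ofReal_abs, ← ofReal_mul (abs_nonneg _),
      ofReal_rpow_of_nonneg (by positivity) hq.le, Real.mul_rpow (abs_nonneg _) hA,
      ← Real.rpow_mul (Aw.nonneg x), one_div_mul_cancel hq.ne', Real.rpow_one]
  simp_rw [ENNReal.ofReal_mul' hA]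
  rw [lintegral_mul_const' _ _ ofReal_ne_top, hsplit]
  gcongr
  exact enorm_Hop_le hφ x

theorem lintegral_ofReal_dilation_rpow_eq (hq : 0 < q) (hqp : q < p) {c t : ℝ} (hc : 0 ≤ c)
    (ht : 0 < t) :
    ∫⁻ x, ENNReal.ofReal
        (c * |f (x / t)| * (Aw α β (x / t) / Aw α β x) * Aw α β x ^ (1 / q)) ^ q =
      ENNReal.ofReal t * ∫⁻ u, ENNReal.ofReal (c ^ q) *
        (ENNReal.ofReal (|f u| ^ p * Aw α β u) ^ (q / p) * ENNReal.ofReal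
          ((Aw α β u ^ (q - q / p) / Aw α β (t * u) ^ (q - 1)) ^ (p / (p - q))) ^
            ((p - q) / p)) := by
  have hp : 0 < p := hq.trans hqp
  have hpq : 0 < p - q := by linarith
  rw [lintegral_eq_ofReal_abs_mul_lintegral_comp_mul_left ht.ne', abs_of_pos ht]
  congr 1
  refine lintegral_congr_ae ((Measure.ae_ne volume 0).mono fun u hu => ?_)
  have hAu := Aw.pos (α := α) (β := β) hu
  have hAtu := Aw.pos (α := α) (β := β) (mul_ne_zero ht.ne' hu)
  simp only [mul_div_cancel_left₀ u ht.ne']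
  rw [ofReal_rpow_of_nonneg (by positivity) hq.le,
    Real.mul_mul_div_mul_rpow_one_div_rpow hq hqp hc (abs_nonneg _) hAu hAtu,
    ofReal_mul (by positivity), ofReal_mul (by positivity),
    ofReal_rpow_of_nonneg (by positivity) (by positivity),
    ofReal_rpow_of_nonneg (by positivity) (by positivity)]

theorem lintegral_ofReal_dilation_rpow_le (hq : 0 < q) (hqp : q < p) (hf : Measurable f)
    {c t : ℝ} (hc : 0 ≤ c) (ht : 0 < t) :
    (∫⁻ x, ENNReal.ofReal
        (c * |f (x / t)| * (Aw α β (x / t) / Aw α β x) * Aw α β x ^ (1 / q)) ^ q) ^ (1 / q) ≤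
      ENNReal.ofReal (c * t ^ (1 / q)) * weightQuotientIntegral α β p q t ^ ((p - q) / (p * q)) *
        lpN α β p univ f := by
  have hp : 0 < p := hq.trans hqp
  set X : ℝ → ℝ≥0∞ := fun u => ENNReal.ofReal (|f u| ^ p * Aw α β u)
  set Y : ℝ → ℝ≥0∞ := fun u => ENNReal.ofReal
    ((Aw α β u ^ (q - q / p) / Aw α β (t * u) ^ (q - 1)) ^ (p / (p - q)))
  have hholder : ∫⁻ u, X u ^ (q / p) * Y u ^ ((p - q) / p) ≤
      (∫⁻ u, X u) ^ (q / p) * (∫⁻ u, Y u) ^ ((p - q) / p) :=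
    lintegral_mul_norm_pow_le (by fun_prop) (by fun_prop) (by positivity)
      (div_nonneg (by linarith) hp.le) (by field_simp; ring)
  have hXN : ∫⁻ u, X u = lpN α β p univ f ^ p := (lpN_univ_rpow hp).symm
  have hYK : ∫⁻ u, Y u = weightQuotientIntegral α β p q t := rfl
  have hq' : 0 ≤ 1 / q := by positivity
  calc _ = (ENNReal.ofReal t * ENNReal.ofReal (c ^ q) *
        ∫⁻ u, X u ^ (q / p) * Y u ^ ((p - q) / p)) ^ (1 / q) := by
        rw [lintegral_ofReal_dilation_rpow_eq hq hqp hc ht,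
          lintegral_const_mul' _ _ ofReal_ne_top, mul_assoc]
    _ ≤ (ENNReal.ofReal t * ENNReal.ofReal (c ^ q) *
        ((∫⁻ u, X u) ^ (q / p) * (∫⁻ u, Y u) ^ ((p - q) / p))) ^ (1 / q) := by gcongr
    _ = _ := by
      rw [hXN, hYK, ← rpow_mul, mul_div_cancel₀ _ hp.ne', mul_rpow_of_nonneg _ _ hq',
        mul_rpow_of_nonneg _ _ hq', mul_rpow_of_nonneg _ _ hq', ← rpow_mul, ← rpow_mul,
        mul_one_div_cancel hq.ne', rpow_one, ofReal_rpow_of_nonneg ht.le hq',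
        ofReal_rpow_of_nonneg (by positivity) hq', ← Real.rpow_mul hc, mul_one_div_cancel hq.ne',
        Real.rpow_one, ofReal_mul hc, mul_one_div, div_div]
      ring

theorem lpN_Hop_le (hq : 1 ≤ q) (hqp : q < p) (hφ : Measurable φ) (hφ0 : ∀ t, 0 ≤ φ t)
    (hf : Measurable f) (hfp : lpN α β p univ f ≠ ⊤) :
    lpN α β q univ (Hop α β φ f) ≤
      (∫⁻ t in Ioi 0, ENNReal.ofReal (φ t / t * t ^ (1 / q)) *
        weightQuotientIntegral α β p q t ^ ((p - q) / (p * q))) * lpN α β p univ f := by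
  have hq0 : 0 < q := by linarith
  set g : ℝ → ℝ → ℝ≥0∞ := fun t x => ENNReal.ofReal
    (φ t / t * |f (x / t)| * (Aw α β (x / t) / Aw α β x) * Aw α β x ^ (1 / q))
  have hg : Measurable (uncurry g) := by fun_prop
  calc lpN α β q univ (Hop α β φ f)
      = (∫⁻ x, ENNReal.ofReal (|Hop α β φ f x| ^ q * Aw α β x)) ^ (1 / q) := by
        rw [lpN, Measure.restrict_univ]
    _ ≤ (∫⁻ x, (∫⁻ t in Ioi 0, g t x) ^ q) ^ (1 / q) := by
        gcongr with x
        exact ofReal_rpow_abs_Hop_mul_le hφ0 hq0 x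
    _ ≤ ∫⁻ t in Ioi 0, (∫⁻ x, g t x ^ q) ^ (1 / q) := lintegral_rpow_lintegral_le hg hq
    _ ≤ ∫⁻ t in Ioi 0, ENNReal.ofReal (φ t / t * t ^ (1 / q)) *
          weightQuotientIntegral α β p q t ^ ((p - q) / (p * q)) * lpN α β p univ f :=
        setLIntegral_mono' measurableSet_Ioi fun t ht =>
          lintegral_ofReal_dilation_rpow_le hq0 hqp hf (div_nonneg (hφ0 t) (le_of_lt ht)) ht
    _ = _ := lintegral_mul_const' _ _ hfp

end Hausdorff

theorem hausdorff_Lp_Lq_bounded_general (α β : ℝ)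
    (p q : ℝ) (hq : 1 < q) (hqp : q < p)
    (φ : ℝ → ℝ) (hφpos : ∀ t, 0 ≤ φ t) (hφint : IntegrableOn φ (Set.Ioi 0))
    (Cpq : ℝ≥0∞)
    (hC : Cpq = ∫⁻ t in Set.Ioi (0 : ℝ),
      ENNReal.ofReal ((φ t / t) * t ^ (1/q)) *
        (∫⁻ u : ℝ, ENNReal.ofReal
          ((Aw α β u ^ (q - q/p) / Aw α β (t * u) ^ (q - 1)) ^ (p / (p - q)))) ^
          ((p - q) / (p * q)))
    (f : ℝ → ℝ) (hf : Measurable f) (hfLp : lpN α β p Set.univ f < ⊤) :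
    lpN α β q Set.univ (Hop α β φ f) ≤ Cpq * lpN α β p Set.univ f := by
  -- `Hop` and the constant only see `φ` on `Ioi 0`, where it agrees a.e. with a measurable `ψ ≥ 0`
  have hφm := hφint.aestronglyMeasurable.aemeasurable
  set ψ : ℝ → ℝ := fun t => max (hφm.mk φ t) 0
  have hφψ : φ =ᵐ[volume.restrict (Ioi 0)] ψ :=
    hφm.ae_eq_mk.mono fun t ht => by simp only [ψ, ← ht, max_eq_left (hφpos t)]
  have hHop : Hop α β φ f = Hop α β ψ f :=
    funext fun x => integral_congr_ae (hφψ.mono fun t ht => by simp only [ht])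
  have hCψ : Cpq = ∫⁻ t in Ioi 0, ENNReal.ofReal (ψ t / t * t ^ (1 / q)) *
      weightQuotientIntegral α β p q t ^ ((p - q) / (p * q)) :=
    hC.trans (lintegral_congr_ae (hφψ.mono fun t ht => by simp only [ht, weightQuotientIntegral]))
  rw [hHop, hCψ]
  exact lpN_Hop_le hq.le hqp (hφm.measurable_mk.max measurable_const) (fun t => le_max_right _ _) hf
    hfLp.ne

/-- Sufficient condition for `L^p → L^q`-boundedness of the Hausdorff operator. -/
theorem hausdorff_Lp_Lq_bounded (α β : ℝ) (hβα : β ≤ α) (hβ : -(1/2 : ℝ) ≤ β)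
    (hα : -(1/2 : ℝ) < α)
    (p q : ℝ) (hq : 1 < q) (hqp : q < p)
    (φ : ℝ → ℝ) (hφpos : ∀ t, 0 ≤ φ t) (hφint : IntegrableOn φ (Set.Ioi 0))
    (Cpq : ℝ≥0∞)
    (hC : Cpq = ∫⁻ t in Set.Ioi (0 : ℝ),
      ENNReal.ofReal ((φ t / t) * t ^ (1/q)) *
        (∫⁻ u : ℝ, ENNReal.ofReal
          ((Aw α β u ^ (q - q/p) / Aw α β (t * u) ^ (q - 1)) ^ (p / (p - q)))) ^
          ((p - q) / (p * q)))
    (hCfin : Cpq < ⊤)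
    (f : ℝ → ℝ) (hf : Measurable f) (hfLp : lpN α β p Set.univ f < ⊤) :
    lpN α β q Set.univ (Hop α β φ f) ≤ Cpq * lpN α β p Set.univ f :=
  hausdorff_Lp_Lq_bounded_general α β p q hq hqp φ hφpos hφint Cpq hC f hf hfLp
end

section
/- Let 0 < s < 1, let -∞ < a < b ≤ ∞, and let h be a non-negative and non-increasing function on the interval (a,b). Then (∫_a^b h(t) dt)^s ≤ s · ∫_a^b h(t)^s · (t-a)^{s-1} dt. -/
/-!
Write `F x = ∫_a^x h`. Since `h` is non-increasing, `F x ≥ h x * (x - a)`, and `F` has right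
derivative `h (x+) ≤ h x` everywhere. As `s - 1 ≤ 0`, the right derivative of `F ^ s` is
therefore `s * F x ^ (s - 1) * h (x+) ≤ s * h x ^ s * (x - a) ^ (s - 1)`, and integrating
over `[a, c]` gives the inequality for bounded `h` on bounded intervals. The general case
follows by monotone convergence, truncating `h` from above, near `a` and far to the right.
-/

open MeasureTheory Set ENNReal Filter Topology

theorem mul_rpow_sub_one_le_of_mul_le {L y d H s : ℝ} (hL : 0 ≤ L) (hLy : L ≤ y) (hd : 0 < d)
    (hyd : y * d ≤ H) (hs : s ≤ 1) : L * H ^ (s - 1) ≤ y ^ s * d ^ (s - 1) := by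
  rcases (hL.trans hLy).eq_or_lt with rfl | hy
  · rw [le_antisymm hLy hL, zero_mul]; positivity
  calc L * H ^ (s - 1) ≤ y * (y * d) ^ (s - 1) :=
        mul_le_mul hLy (Real.rpow_le_rpow_of_nonpos (mul_pos hy hd) hyd (by linarith))
          (Real.rpow_nonneg ((mul_pos hy hd).le.trans hyd) _) hy.le
    _ = y ^ s * d ^ (s - 1) := by
        rw [Real.mul_rpow hy.le hd.le, Real.rpow_sub_one hy.ne']
        field_simp

namespace Antitone

variable {f : ℝ → ℝ}

theorem mul_sub_le_intervalIntegral (hf : Antitone f) {a x : ℝ} (hax : a ≤ x) :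
    f x * (x - a) ≤ ∫ t in a..x, f t :=
  calc f x * (x - a) = ∫ _ in a..x, f x := by simp [mul_comm]
    _ ≤ ∫ t in a..x, f t := intervalIntegral.integral_mono_on hax intervalIntegrable_const
        hf.intervalIntegrable fun _ ht => hf ht.2

theorem hasDerivWithinAt_intervalIntegral_Ici (hf : Antitone f) (a x : ℝ) :
    HasDerivWithinAt (fun u => ∫ t in a..u, f t) (sSup (f '' Ioi x)) (Ici x) x :=
  intervalIntegral.integral_hasDerivWithinAt_of_tendsto_ae_right hf.intervalIntegrable
    hf.measurable.stronglyMeasurable.stronglyMeasurableAtFilter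
    ((hf.tendsto_nhdsGT x).mono_left inf_le_left)

theorem intervalIntegrable_rpow_mul_sub_rpow (hf : Antitone f) (hf0 : 0 ≤ f) {s : ℝ}
    (hs : 0 < s) {a c : ℝ} (hac : a ≤ c) :
    IntervalIntegrable (fun t => f t ^ s * (t - a) ^ (s - 1)) volume a c := by
  have hbound : IntervalIntegrable (fun t => f a ^ s * (t - a) ^ (s - 1)) volume a c := by
    have := (intervalIntegral.intervalIntegrable_rpow' (r := s - 1) (a := 0) (b := c - a)
      (by linarith)).comp_sub_right a
    simp only [zero_add, sub_add_cancel] at this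
    exact this.const_mul _
  refine hbound.mono_fun ((hf.measurable.pow_const s).mul
    ((measurable_id.sub_const a).pow_const _)).aestronglyMeasurable ?_
  rw [uIoc_of_le hac]
  filter_upwards [ae_restrict_mem measurableSet_Ioc] with t ht
  have hta : 0 ≤ t - a := by linarith [ht.1]
  rw [Real.norm_of_nonneg (mul_nonneg (Real.rpow_nonneg (hf0 t) _) (Real.rpow_nonneg hta _)),
    Real.norm_of_nonneg (mul_nonneg (Real.rpow_nonneg (hf0 a) _) (Real.rpow_nonneg hta _))]
  gcongr
  · exact hf0 t
  · exact hf ht.1.le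

/-- The shift by `ε` keeps the base away from `0`, where `x ↦ x ^ s` is not differentiable. -/
theorem add_rpow_sub_rpow_le_intervalIntegral (hf : Antitone f) (hf0 : 0 ≤ f) {s : ℝ}
    (hs0 : 0 < s) (hs1 : s ≤ 1) {a c : ℝ} (hac : a ≤ c) {ε : ℝ} (hε : 0 < ε) :
    ((∫ t in a..c, f t) + ε) ^ s - ε ^ s ≤
      s * ∫ t in a..c, f t ^ s * (t - a) ^ (s - 1) := by
  set F : ℝ → ℝ := fun x => ∫ t in a..x, f t
  have hF_cont : Continuous F :=
    intervalIntegral.continuous_primitive (fun _ _ => hf.intervalIntegrable) a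
  have hFε : ∀ x, a ≤ x → f x * (x - a) ≤ F x + ε := fun x hx => by
    linarith [hf.mul_sub_le_intervalIntegral hx]
  have hFε_pos : ∀ x, a ≤ x → 0 < F x + ε := fun x hx => by
    linarith [hf.mul_sub_le_intervalIntegral hx, mul_nonneg (hf0 x) (sub_nonneg.2 hx)]
  rw [← intervalIntegral.integral_const_mul]
  have hftc := intervalIntegral.sub_le_integral_of_hasDeriv_right_of_le hac
    (g := fun x => (F x + ε) ^ s)
    (g' := fun x => sSup (f '' Ioi x) * s * (F x + ε) ^ (s - 1))
    ((hF_cont.add continuous_const).rpow_const fun _ => Or.inr hs0.le).continuousOn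
    (fun x hx => (((hf.hasDerivWithinAt_intervalIntegral_Ici a x).mono
      Ioi_subset_Ici_self).add_const ε).rpow_const (Or.inl (hFε_pos x hx.1.le).ne'))
    ((intervalIntegrable_iff_integrableOn_Icc_of_le hac).mp
      ((hf.intervalIntegrable_rpow_mul_sub_rpow hf0 hs0 hac).const_mul s))
    (fun x hx => ?_)
  · simpa [F] using hftc
  have hL0 : 0 ≤ sSup (f '' Ioi x) :=
    (hf0 (x + 1)).trans (le_csSup ⟨f x, by rintro _ ⟨t, ht, rfl⟩; exact hf ht.le⟩
      (mem_image_of_mem f (lt_add_one x)))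
  have hLf : sSup (f '' Ioi x) ≤ f x :=
    csSup_le (nonempty_Ioi.image f) (by rintro _ ⟨t, ht, rfl⟩; exact hf ht.le)
  calc sSup (f '' Ioi x) * s * (F x + ε) ^ (s - 1)
      = s * (sSup (f '' Ioi x) * (F x + ε) ^ (s - 1)) := by ring
    _ ≤ s * (f x ^ s * (x - a) ^ (s - 1)) := mul_le_mul_of_nonneg_left
        (mul_rpow_sub_one_le_of_mul_le hL0 hLf (sub_pos.2 hx.1) (hFε x hx.1.le) hs1) hs0.le

theorem rpow_intervalIntegral_le (hf : Antitone f) (hf0 : 0 ≤ f) {s : ℝ} (hs0 : 0 < s)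
    (hs1 : s ≤ 1) {a c : ℝ} (hac : a ≤ c) :
    (∫ t in a..c, f t) ^ s ≤ s * ∫ t in a..c, f t ^ s * (t - a) ^ (s - 1) := by
  set I := ∫ t in a..c, f t
  have hlim :
      Tendsto (fun ε : ℝ => (I + ε) ^ s - ε ^ s) (𝓝[>] 0) (𝓝 ((I + 0) ^ s - 0 ^ s)) :=
    ((((continuous_const.add continuous_id).rpow_const fun _ => Or.inr hs0.le).sub
      (continuous_id.rpow_const fun _ => Or.inr hs0.le)).tendsto 0).mono_left nhdsWithin_le_nhds
  rw [add_zero, Real.zero_rpow hs0.ne', sub_zero] at hlim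
  exact _root_.le_of_tendsto hlim (eventually_nhdsWithin_of_forall fun ε hε =>
    hf.add_rpow_sub_rpow_le_intervalIntegral hf0 hs0 hs1 hac hε)

end Antitone

theorem Antitone.rpow_setLIntegral_Ioc_le {G : ℝ → ℝ≥0∞} (hG : Antitone G)
    (hG_top : ∀ t, G t ≠ ⊤) {s : ℝ} (hs0 : 0 < s) (hs1 : s ≤ 1) {a c : ℝ}
    (hac : a ≤ c) :
    (∫⁻ t in Ioc a c, G t) ^ s ≤
      ENNReal.ofReal s * ∫⁻ t in Ioc a c, G t ^ s * ENNReal.ofReal ((t - a) ^ (s - 1)) := by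
  set f : ℝ → ℝ := fun t => (G t).toReal
  have hf : Antitone f := fun x y hxy => ENNReal.toReal_mono (hG_top x) (hG hxy)
  have hf0 : 0 ≤ f := fun t => ENNReal.toReal_nonneg
  have hlhs : ∫⁻ t in Ioc a c, G t = ENNReal.ofReal (∫ t in a..c, f t) := by
    rw [intervalIntegral.integral_of_le hac, ofReal_integral_eq_lintegral_ofReal
      hf.intervalIntegrable.1 (Eventually.of_forall hf0)]
    simp only [f, ENNReal.ofReal_toReal (hG_top _)]
  have hrhs : ENNReal.ofReal (∫ t in a..c, f t ^ s * (t - a) ^ (s - 1)) =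
      ∫⁻ t in Ioc a c, G t ^ s * ENNReal.ofReal ((t - a) ^ (s - 1)) := by
    rw [intervalIntegral.integral_of_le hac, ofReal_integral_eq_lintegral_ofReal
      (hf.intervalIntegrable_rpow_mul_sub_rpow hf0 hs0 hac).1]
    · refine setLIntegral_congr_fun measurableSet_Ioc fun t _ => ?_
      rw [ENNReal.ofReal_mul (Real.rpow_nonneg (hf0 t) _),
        ← ENNReal.ofReal_rpow_of_nonneg (hf0 t) hs0.le, ENNReal.ofReal_toReal (hG_top t)]
    · filter_upwards [ae_restrict_mem measurableSet_Ioc] with t ht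
      exact mul_nonneg (Real.rpow_nonneg (hf0 t) _) (Real.rpow_nonneg (sub_nonneg.2 ht.1.le) _)
  calc (∫⁻ t in Ioc a c, G t) ^ s = ENNReal.ofReal ((∫ t in a..c, f t) ^ s) := by
        rw [hlhs, ENNReal.ofReal_rpow_of_nonneg
          (intervalIntegral.integral_nonneg hac fun t _ => hf0 t) hs0.le]
    _ ≤ ENNReal.ofReal (s * ∫ t in a..c, f t ^ s * (t - a) ^ (s - 1)) :=
        ENNReal.ofReal_le_ofReal (hf.rpow_intervalIntegral_le hf0 hs0 hs1 hac)
    _ = _ := by rw [ENNReal.ofReal_mul hs0.le, hrhs]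

theorem AntitoneOn.rpow_setLIntegral_Ioi_le {g : ℝ → ℝ≥0∞} {a : ℝ}
    (hg : AntitoneOn g (Ioi a)) {s : ℝ} (hs0 : 0 < s) (hs1 : s ≤ 1) :
    (∫⁻ t in Ioi a, g t) ^ s ≤
      ENNReal.ofReal s * ∫⁻ t in Ioi a, g t ^ s * ENNReal.ofReal ((t - a) ^ (s - 1)) := by
  set δ : ℕ → ℝ := fun n => 1 / ((n : ℝ) + 1)
  have hδ : ∀ n, a < a + δ n := fun n => lt_add_of_pos_right a (by positivity)
  -- `G n` freezes `g` to the left of `a + δ n` and caps it at `n`: antitone and finite on `ℝ`.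
  set G : ℕ → ℝ → ℝ≥0∞ := fun n t => min (g (max t (a + δ n))) n
  have hG_le : ∀ n, ∀ t ∈ Ioi a, G n t ≤ g t := fun n t ht =>
    (min_le_left _ _).trans (hg ht ((hδ n).trans_le (le_max_right _ _)) (le_max_left _ _))
  have hG_anti : ∀ n, Antitone (G n) := fun n x y hxy =>
    min_le_min_right _ (hg ((hδ n).trans_le (le_max_right _ _))
      ((hδ n).trans_le (le_max_right _ _)) (max_le_max_right _ hxy))
  have hG_top : ∀ n t, G n t ≠ ⊤ := fun n t =>
    ne_top_of_le_ne_top (natCast_ne_top n) (min_le_right _ _)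
  set F : ℕ → ℝ → ℝ≥0∞ := fun n => (Iic (a + n)).indicator (G n)
  have hF : ∀ n, ∫⁻ t in Ioi a, F n t = ∫⁻ t in Ioc a (a + n), G n t := fun n => by
    rw [setLIntegral_indicator measurableSet_Iic, Iic_inter_Ioi]
  have hF_mono : Monotone F := fun n m hnm t => by
    have hδnm : δ m ≤ δ n := one_div_le_one_div_of_le (by positivity) (by simpa using hnm)
    have hGnm : G n t ≤ G m t :=
      min_le_min (hg ((hδ m).trans_le (le_max_right _ _)) ((hδ n).trans_le (le_max_right _ _))
        (max_le_max le_rfl (by linarith))) (Nat.mono_cast hnm)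
    exact (indicator_le_indicator hGnm).trans (indicator_le_indicator_of_subset
      (Iic_subset_Iic.2 (by simpa using hnm)) (fun _ => zero_le) t)
  have hF_sup : ∀ t ∈ Ioi a, g t ≤ ⨆ n, F n t := fun t ht => by
    refine le_of_forall_lt fun r hr => ?_
    obtain ⟨N, hN⟩ := ENNReal.exists_nat_gt hr.ne_top
    obtain ⟨n, hNn, htn, hδn⟩ : ∃ n : ℕ, N ≤ n ∧ t - a ≤ n ∧ δ n < t - a :=
      ((eventually_ge_atTop N).and ((tendsto_natCast_atTop_atTop.eventually_ge_atTop (t - a)).and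
        (tendsto_one_div_add_atTop_nhds_zero_nat.eventually (gt_mem_nhds (sub_pos.2 ht))))).exists
    have hFn : F n t = min (g t) n := by
      simp only [F, G, indicator_of_mem (show t ∈ Iic (a + n) by simp; linarith),
        max_eq_left (show a + δ n ≤ t by linarith)]
    exact lt_iSup_iff.2 ⟨n, hFn ▸ lt_min hr (hN.trans_le (Nat.mono_cast hNn))⟩
  have happrox : ∫⁻ t in Ioi a, g t ≤ ⨆ n : ℕ, ∫⁻ t in Ioc a (a + n), G n t :=
    calc ∫⁻ t in Ioi a, g t ≤ ∫⁻ t in Ioi a, ⨆ n, F n t :=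
          setLIntegral_mono' measurableSet_Ioi hF_sup
      _ = ⨆ n : ℕ, ∫⁻ t in Ioc a (a + n), G n t := by
          simp only [← hF]
          exact lintegral_iSup (fun n => (hG_anti n).measurable.indicator measurableSet_Iic)
            hF_mono
  calc (∫⁻ t in Ioi a, g t) ^ s ≤ (⨆ n : ℕ, ∫⁻ t in Ioc a (a + n), G n t) ^ s :=
        ENNReal.rpow_le_rpow happrox hs0.le
    _ = ⨆ n : ℕ, (∫⁻ t in Ioc a (a + n), G n t) ^ s :=
        (ENNReal.orderIsoRpow s hs0).map_iSup _
    _ ≤ _ := iSup_le fun n => by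
        refine ((hG_anti n).rpow_setLIntegral_Ioc_le (hG_top n) hs0 hs1
          (by simp)).trans (mul_le_mul_right ?_ _)
        calc ∫⁻ t in Ioc a (a + n), G n t ^ s * ENNReal.ofReal ((t - a) ^ (s - 1))
            ≤ ∫⁻ t in Ioc a (a + n), g t ^ s * ENNReal.ofReal ((t - a) ^ (s - 1)) :=
              setLIntegral_mono' measurableSet_Ioc fun t ht => by gcongr; exact hG_le n t ht.1
          _ ≤ _ := lintegral_mono_set Ioc_subset_Ioi_self

theorem pow_integral_le_integral_pow_general (s : ℝ) (hs0 : 0 < s) (hs1 : s < 1)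
    (a : ℝ) (b : EReal)
    (h : ℝ → ℝ)
    (hmono : ∀ x y : ℝ, a < x → x ≤ y → (y : EReal) < b → h y ≤ h x) :
    (∫⁻ t in {t : ℝ | a < t ∧ (t : EReal) < b}, ENNReal.ofReal (h t)) ^ s ≤
      ENNReal.ofReal s *
        ∫⁻ t in {t : ℝ | a < t ∧ (t : EReal) < b},
          ENNReal.ofReal (h t ^ s * (t - a) ^ (s - 1)) := by
  set S : Set ℝ := {t : ℝ | a < t ∧ (t : EReal) < b}
  have hS : MeasurableSet S :=
    measurableSet_Ioi.inter (measurableSet_lt measurable_coe_real_ereal measurable_const)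
  have hSa : S ∩ Ioi a = S := inter_eq_left.2 fun t ht => ht.1
  have hg : AntitoneOn (S.indicator fun t => ENNReal.ofReal (h t)) (Ioi a) :=
    fun x hx y _ hxy => by
      by_cases hyS : y ∈ S
      · have hxS : x ∈ S := ⟨hx, lt_of_le_of_lt (EReal.coe_le_coe_iff.2 hxy) hyS.2⟩
        rw [indicator_of_mem hyS, indicator_of_mem hxS]
        exact ENNReal.ofReal_le_ofReal (hmono x y hx hxy hyS.2)
      · simp [indicator_of_notMem hyS]
  have hg_pow : ∀ t, (S.indicator (fun t => ENNReal.ofReal (h t)) t) ^ s *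
      ENNReal.ofReal ((t - a) ^ (s - 1)) =
      S.indicator (fun t => ENNReal.ofReal (h t) ^ s * ENNReal.ofReal ((t - a) ^ (s - 1))) t :=
    fun t => by by_cases ht : t ∈ S <;> simp [ht, hs0]
  have key := hg.rpow_setLIntegral_Ioi_le hs0 hs1.le
  simp only [hg_pow, setLIntegral_indicator hS, hSa] at key
  refine key.trans (mul_le_mul_right (setLIntegral_mono' hS fun t _ => ?_) _)
  rcases le_or_gt 0 (h t) with hh | hh
  · rw [ENNReal.ofReal_rpow_of_nonneg hh hs0.le, ← ENNReal.ofReal_mul (Real.rpow_nonneg hh _)]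
  · simp [ENNReal.ofReal_of_nonpos hh.le, ENNReal.zero_rpow_of_pos hs0]

/-- If `0 < s < 1`, `-∞ < a < b ≤ ∞`, and `h` is non-negative and non-increasing on `(a,b)`,
then `(∫_a^b h(t) dt)^s ≤ s ∫_a^b h(t)^s (t-a)^{s-1} dt`. -/
theorem pow_integral_le_integral_pow (s : ℝ) (hs0 : 0 < s) (hs1 : s < 1)
    (a : ℝ) (b : EReal) (hab : (a : EReal) < b)
    (h : ℝ → ℝ)
    (hpos : ∀ t : ℝ, a < t → (t : EReal) < b → 0 ≤ h t)
    (hmono : ∀ x y : ℝ, a < x → x ≤ y → (y : EReal) < b → h y ≤ h x) :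
    (∫⁻ t in {t : ℝ | a < t ∧ (t : EReal) < b}, ENNReal.ofReal (h t)) ^ s ≤
      ENNReal.ofReal s *
        ∫⁻ t in {t : ℝ | a < t ∧ (t : EReal) < b},
          ENNReal.ofReal (h t ^ s * (t - a) ^ (s - 1)) :=
  pow_integral_le_integral_pow_general s hs0 hs1 a b h hmono
end
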